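/- arXiv:2403.14564 — 5 statements merged into one kernel-verified Lean document; each statement's English description precedes it below -/
import Mathlib

section
/- Let K be a field and let D₁, D₂ be finite-dimensional division algebras over K (not necessarily central) such that gcd([D₁ : K], [D₂ : K]) = 1. Then D₁ ⊗_K D₂ is a division algebra over K. -/
/-!
Every module `M` over `A = D₁ ⊗[K] D₂` is a vector space over both `D₁` and `D₂`, so
`dim_K M` is divisible by `[D₁ : K]` and `[D₂ : K]`, hence by their product `dim_K A`.
Applied to a left ideal `I` and using `dim_K I ≤ dim_K A`, this forces `I = 0` or `I = A`;
a ring with no nontrivial left ideals is a division ring.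
-/

open scoped TensorProduct

open Module

theorem finrank_dvd_finrank_of_algHom {K D A : Type*} (M : Type*) [Field K] [DivisionRing D]
    [Algebra K D] [Ring A] [Algebra K A] [AddCommGroup M] [Module A M] [Module K M]
    [IsScalarTower K A M] (f : D →ₐ[K] A) :
    finrank K D ∣ finrank K M := by
  let : Module D M := Module.compHom M f.toRingHom
  have : IsScalarTower K D M := ⟨fun k d x ↦ by
    change f (k • d) • x = k • (f d • x)
    rw [map_smul, smul_assoc]⟩
  exact Dvd.intro _ (finrank_mul_finrank K D M)

theorem finrank_tensorProduct_dvd_finrank_of_coprime {K D₁ D₂ : Type*} (M : Type*) [Field K]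
    [DivisionRing D₁] [DivisionRing D₂] [Algebra K D₁] [Algebra K D₂] [AddCommGroup M]
    [Module (D₁ ⊗[K] D₂) M] [Module K M] [IsScalarTower K (D₁ ⊗[K] D₂) M]
    (h : Nat.Coprime (finrank K D₁) (finrank K D₂)) :
    finrank K (D₁ ⊗[K] D₂) ∣ finrank K M :=
  finrank_tensorProduct (R := K) (S := K) (M := D₁) (M' := D₂) ▸ h.mul_dvd_of_dvd_of_dvd
    (finrank_dvd_finrank_of_algHom M (Algebra.TensorProduct.includeLeft : D₁ →ₐ[K] D₁ ⊗[K] D₂))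
    (finrank_dvd_finrank_of_algHom M (Algebra.TensorProduct.includeRight : D₂ →ₐ[K] D₁ ⊗[K] D₂))

theorem isSimpleModule_self_of_finrank_dvd_finrank_ideal {K A : Type*} [Field K] [Ring A]
    [Nontrivial A] [Algebra K A] [FiniteDimensional K A]
    (h : ∀ I : Ideal A, finrank K A ∣ finrank K I) : IsSimpleModule A A := by
  refine (isSimpleModule_iff A A).mpr ⟨fun I ↦ ?_⟩
  have hle : finrank K (I.restrictScalars K) ≤ finrank K A := Submodule.finrank_le _
  obtain ⟨c, hc⟩ := h I
  have hc1 : c ≤ 1 :=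
    Nat.le_of_mul_le_mul_left (by rw [mul_one, ← hc]; exact hle) finrank_pos
  obtain rfl | rfl : c = 0 ∨ c = 1 := by omega
  · left
    rw [mul_zero] at hc
    exact (Submodule.restrictScalars_eq_bot_iff K A A).mp (Submodule.finrank_eq_zero.mp hc)
  · right
    rw [mul_one] at hc
    exact (Submodule.restrictScalars_eq_top_iff K A A).mp (Submodule.eq_top_of_finrank_eq hc)

/-- If `D₁`, `D₂` are finite-dimensional division algebras over a field `K` of coprime
dimensions, then `D₁ ⊗[K] D₂` is a division algebra. -/
theorem tensor_product_of_coprime_dim_isDivision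
    (K D₁ D₂ : Type*) [Field K]
    [DivisionRing D₁] [DivisionRing D₂] [Algebra K D₁] [Algebra K D₂]
    [FiniteDimensional K D₁] [FiniteDimensional K D₂]
    (h : Nat.Coprime (Module.finrank K D₁) (Module.finrank K D₂)) :
    Nontrivial (D₁ ⊗[K] D₂) ∧ ∀ x : D₁ ⊗[K] D₂, x ≠ 0 → IsUnit x :=
  isSimpleModule_self_iff_isUnit.mp <| isSimpleModule_self_of_finrank_dvd_finrank_ideal
    fun I ↦ finrank_tensorProduct_dvd_finrank_of_coprime I h
end

section
/- Let Z₁ and Z₂ be finite field extensions of a field K with gcd([Z₁ : K], [Z₂ : K]) = 1. Then Z₁ ⊗_K Z₂ is a field, and [Z₁ ⊗_K Z₂ : K] = [Z₁ : K] · [Z₂ : K]. -/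
/-!
For a maximal ideal `m` of `A = Z₁ ⊗[K] Z₂`, the field `A ⧸ m` receives `K`-embeddings of `Z₁`
and `Z₂`, so its degree over `K` is divisible by both degrees, hence by their product `dim_K A`.
A quotient of `A` of full dimension is `A` itself, so `m = ⊥` and `A` is a field.
-/

open scoped TensorProduct

open Module

theorem AlgHom.finrank_dvd_finrank {K Z L : Type*} [Field K] [Field Z] [CommRing L]
    [Algebra K Z] [Algebra K L] (f : Z →ₐ[K] L) : finrank K Z ∣ finrank K L := by
  algebraize [f.toRingHom]
  exact finrank_dvd_finrank_right K Z L

theorem Ideal.eq_bot_of_finrank_dvd_finrank_quotient {K A : Type*} [Field K] [CommRing A]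
    [Algebra K A] [FiniteDimensional K A] {I : Ideal A} (hI : I ≠ ⊤)
    (h : finrank K A ∣ finrank K (A ⧸ I)) : I = ⊥ := by
  have : Nontrivial (A ⧸ I) := Ideal.Quotient.nontrivial_iff.mpr hI
  let π := (Ideal.Quotient.mkₐ K I).toLinearMap
  have hsurj : Function.Surjective π := Ideal.Quotient.mkₐ_surjective K I
  have hle : finrank K (A ⧸ I) ≤ finrank K A := LinearMap.finrank_le_finrank_of_surjective hsurj
  have hinj : Function.Injective π :=
    (LinearMap.injective_iff_surjective_of_finrank_eq_finrank
      (le_antisymm hle (Nat.le_of_dvd finrank_pos h)).symm).mpr hsurj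
  rw [← Ideal.mk_ker (I := I)]
  exact (RingHom.injective_iff_ker_eq_bot _).mp hinj

/-- If `Z₁`, `Z₂` are finite field extensions of `K` of coprime degrees, then
`Z₁ ⊗[K] Z₂` is a field of degree `[Z₁ : K] * [Z₂ : K]` over `K`. -/
theorem tensor_product_of_coprime_degree_isField
    (K Z₁ Z₂ : Type*) [Field K] [Field Z₁] [Field Z₂] [Algebra K Z₁] [Algebra K Z₂]
    [FiniteDimensional K Z₁] [FiniteDimensional K Z₂]
    (h : Nat.Coprime (Module.finrank K Z₁) (Module.finrank K Z₂)) :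
    IsField (Z₁ ⊗[K] Z₂) ∧
      Module.finrank K (Z₁ ⊗[K] Z₂) = Module.finrank K Z₁ * Module.finrank K Z₂ := by
  have hrank : finrank K (Z₁ ⊗[K] Z₂) = finrank K Z₁ * finrank K Z₂ := finrank_tensorProduct
  refine ⟨?_, hrank⟩
  have : Nontrivial (Z₁ ⊗[K] Z₂) :=
    nontrivial_of_finrank_pos (R := K) (hrank ▸ Nat.mul_pos finrank_pos finrank_pos)
  obtain ⟨m, hm⟩ := Ideal.exists_maximal (Z₁ ⊗[K] Z₂)
  have hdvd : finrank K (Z₁ ⊗[K] Z₂) ∣ finrank K (Z₁ ⊗[K] Z₂ ⧸ m) := hrank ▸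
    h.mul_dvd_of_dvd_of_dvd
      ((Ideal.Quotient.mkₐ K m).comp Algebra.TensorProduct.includeLeft).finrank_dvd_finrank
      ((Ideal.Quotient.mkₐ K m).comp Algebra.TensorProduct.includeRight).finrank_dvd_finrank
  have hbot : m = ⊥ := Ideal.eq_bot_of_finrank_dvd_finrank_quotient hm.ne_top hdvd
  exact Ring.isField_iff_maximal_bot.mpr (hbot ▸ hm)
end

section
/- Let E be a field of characteristic q > 0 with [E : E^q] = q^δ for some natural number δ. Then for every finite field extension E'/E one has [E' : E'^q] = q^δ. -/
/-- The degree of a field over the range of the algebra map equals the degree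
over the base field. -/
theorem finrank_fieldRange_algebraMap_aux (E E' : Type*) [Field E] [Field E']
    [Algebra E E'] :
    Module.finrank (algebraMap E E').fieldRange E' = Module.finrank E E' := by
  set f := algebraMap E E' with hf
  have hbij : Function.Bijective f.rangeRestrictField :=
    ⟨fun a b hab => f.injective (Subtype.ext_iff.mp hab), f.rangeSRestrict_surjective⟩
  set eqv := RingEquiv.ofBijective f.rangeRestrictField hbij with heqv
  have key := Algebra.lift_rank_eq_of_equiv_equiv
    (R := ↥f.fieldRange) (S := E') (R' := E) (S' := E')
    eqv.symm (RingEquiv.refl E') (by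
      ext x
      show f (eqv.symm x) = (x : E')
      conv_rhs => rw [← eqv.apply_symm_apply x]
      rfl)
  simp only [Module.finrank]
  rw [← Cardinal.toNat_lift (Module.rank f.fieldRange E'), key, Cardinal.toNat_lift]

/-- If `E` has characteristic `q > 0` and `[E : E^q] = q^δ`, then every finite extension
`E'` of `E` satisfies `[E' : E'^q] = q^δ`. -/
theorem finrank_over_frobenius_range_of_finite_extension
    (E E' : Type*) [Field E] [Field E'] [Algebra E E'] [FiniteDimensional E E']
    (q : ℕ) (hq : q.Prime) [ExpChar E q] [ExpChar E' q] (δ : ℕ)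
    (h : Module.finrank (frobenius E q).fieldRange E = q ^ δ) :
    Module.finrank (frobenius E' q).fieldRange E' = q ^ δ := by
  set f := algebraMap E E' with hf
  set φE := frobenius E q with hφE
  set φ := frobenius E' q with hφ
  set M : Subfield E' := (f.comp φE).fieldRange with hM
  have hcomm : φ.comp f = f.comp φE := by
    ext x
    exact (f.map_frobenius q x).symm
  have hML : M ≤ f.fieldRange := by rintro x ⟨y, rfl⟩; exact ⟨φE y, rfl⟩
  have hMK : M ≤ φ.fieldRange := by
    rintro x ⟨y, rfl⟩
    exact ⟨f y, (f.map_frobenius q y).symm⟩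
  have e3 : M.relfinrank f.fieldRange = q ^ δ := by
    have := Subfield.relfinrank_map_map (φE.fieldRange) (⊤ : Subfield E) f
    rwa [RingHom.map_fieldRange, ← RingHom.fieldRange_eq_map,
      Subfield.relfinrank_top_right, h] at this
  have e4 : M.relfinrank φ.fieldRange = Module.finrank f.fieldRange E' := by
    have := Subfield.relfinrank_map_map (f.fieldRange) (⊤ : Subfield E') φ
    rwa [RingHom.map_fieldRange, hcomm, ← RingHom.fieldRange_eq_map,
      Subfield.relfinrank_top_right] at this
  have e5 : Module.finrank f.fieldRange E' = Module.finrank E E' :=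
    finrank_fieldRange_algebraMap_aux E E'
  have e1 := Subfield.relfinrank_mul_finrank_top hML
  have e2 := Subfield.relfinrank_mul_finrank_top hMK
  rw [e3] at e1
  rw [e4] at e2
  have hd : 0 < Module.finrank f.fieldRange E' := by
    rw [e5]; exact Module.finrank_pos
  refine Nat.eq_of_mul_eq_mul_left hd ?_
  calc Module.finrank f.fieldRange E' * Module.finrank φ.fieldRange E'
      = q ^ δ * Module.finrank f.fieldRange E' := e2.trans e1.symm
    _ = Module.finrank f.fieldRange E' * q ^ δ := mul_comm _ _
end

section
/- Let E be a field of characteristic q > 0 with [E : E^q] = q^δ. For each n ∈ ℕ, let E_{q^{-n}} = {λ in a fixed algebraic closure of E : λ^{q^n} ∈ E}. Then E_{q^{-n}} is a field extension of E with [E_{q^{-n}} : E] = q^{δn}. -/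
/-- If `char E = q > 0` and `[E : E^q] = q^δ`, then for each `n` the set
`E_{q^{-n}} = {λ : λ^{q^n} ∈ E}` inside an algebraic closure of `E` is a field extension
of `E` of degree `q^{δ·n}`. -/
theorem purely_inseparable_tower_degree
    (E : Type*) [Field E] (q : ℕ) (hq : q.Prime) [ExpChar E q] (δ : ℕ)
    (h : Module.finrank (frobenius E q).fieldRange E = q ^ δ) (n : ℕ) :
    ∃ L : IntermediateField E (AlgebraicClosure E),
      (L : Set (AlgebraicClosure E)) =
        {lam : AlgebraicClosure E | lam ^ q ^ n ∈ (algebraMap E (AlgebraicClosure E)).range} ∧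
      Module.finrank E L = q ^ (δ * n) := by
  set Ω := AlgebraicClosure E
  haveI : ExpChar Ω q := expChar_of_injective_algebraMap (algebraMap E Ω).injective q
  set f : E →+* Ω := algebraMap E Ω with hf
  set F : Subfield Ω := f.fieldRange with hF
  -- the image of `E` is stable under all iterated Frobenius maps
  have hle : ∀ m, F.map (iterateFrobenius Ω q m) ≤ F := by
    rintro m x hx
    rw [Subfield.mem_map] at hx
    obtain ⟨y, ⟨e, he⟩, hx⟩ := hx
    exact ⟨e ^ q ^ m, by rw [map_pow, he, ← hx, iterateFrobenius_def]⟩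
  -- compatibility of Frobenius with `f`
  have hcomp : ∀ m, (iterateFrobenius Ω q m).comp f = f.comp (iterateFrobenius E q m) := by
    intro m
    ext x
    simp [iterateFrobenius_def, map_pow]
  -- the key degree computation by induction
  have key : ∀ m, Subfield.relfinrank (F.map (iterateFrobenius Ω q m)) F = q ^ (δ * m) := by
    intro m
    induction m with
    | zero =>
      have : F.map (iterateFrobenius Ω q 0) = F := by
        ext x
        simp [Subfield.mem_map, iterateFrobenius_def]
      rw [this, Subfield.relfinrank_self, Nat.mul_zero, pow_zero]
    | succ m ih =>
      have h1 : F.map (iterateFrobenius Ω q (m + 1))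
          = (F.map (iterateFrobenius Ω q m)).map (frobenius Ω q) := by
        rw [Subfield.map_map]
        congr 1
        ext x
        simp [iterateFrobenius_def, frobenius_def, pow_succ, pow_mul]
      have h2 : F.map (iterateFrobenius Ω q 1) = F.map (frobenius Ω q) := by
        congr 1
        ext x
        simp [iterateFrobenius_def, frobenius_def]
      -- base step: `[F : F^q] = q ^ δ`
      have hbase : Subfield.relfinrank (F.map (frobenius Ω q)) F = q ^ δ := by
        have e1 : F.map (frobenius Ω q) = ((frobenius E q).fieldRange).map f := by
          rw [hF, RingHom.fieldRange_eq_map, RingHom.fieldRange_eq_map,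
            Subfield.map_map, Subfield.map_map]
          congr 1
          ext x
          simp [frobenius_def, map_pow]
        have e2 : F = (⊤ : Subfield E).map f := by
          rw [hF, RingHom.fieldRange_eq_map]
        rw [e1, e2, Subfield.relfinrank_map_map, Subfield.relfinrank_top_right, h]
      have hAB : F.map (iterateFrobenius Ω q (m + 1)) ≤ F.map (frobenius Ω q) := by
        rw [h1]
        exact Subfield.map_le_iff_le_comap.mpr
          (le_trans (hle m) (Subfield.map_le_iff_le_comap.mp le_rfl))
      have hBC : F.map (frobenius Ω q) ≤ F := by
        rw [← h2]; exact hle 1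
      have hmul := Subfield.relfinrank_mul_relfinrank hAB hBC
      have hstep : Subfield.relfinrank (F.map (iterateFrobenius Ω q (m + 1)))
          (F.map (frobenius Ω q)) = q ^ (δ * m) := by
        rw [h1, Subfield.relfinrank_map_map, ih]
      rw [hstep, hbase] at hmul
      rw [← hmul, ← pow_add, Nat.mul_succ]
  -- define the intermediate field
  set Ln : Subfield Ω := F.comap (iterateFrobenius Ω q n) with hLn
  have hmem : ∀ x : E, algebraMap E Ω x ∈ Ln := by
    intro x
    rw [hLn, Subfield.mem_comap]
    exact ⟨x ^ q ^ n, by rw [map_pow, iterateFrobenius_def]⟩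
  refine ⟨Ln.toIntermediateField hmem, ?_, ?_⟩
  · ext x
    simp only [SetLike.mem_coe, Set.mem_setOf_eq]
    constructor
    · intro hx
      have : x ∈ Ln := hx
      rw [hLn, Subfield.mem_comap] at this
      obtain ⟨e, he⟩ := this
      exact ⟨e, by rw [he, iterateFrobenius_def]⟩
    · rintro ⟨e, he⟩
      show x ∈ Ln
      rw [hLn, Subfield.mem_comap]
      exact ⟨e, by rw [he, iterateFrobenius_def]⟩
  · -- the degree computation
    have hbot : (⊥ : IntermediateField E Ω).toSubfield = F := by
      ext x
      simp only [IntermediateField.mem_toSubfield, IntermediateField.mem_bot]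
      rfl
    have hcm : (F.map (iterateFrobenius Ω q n)).comap (iterateFrobenius Ω q n) = F :=
      Subfield.comap_map _ _
    calc Module.finrank E (Ln.toIntermediateField hmem)
        = IntermediateField.relfinrank ⊥ (Ln.toIntermediateField hmem) :=
          (IntermediateField.relfinrank_bot_left _).symm
      _ = Subfield.relfinrank F Ln := by
          rw [IntermediateField.relfinrank, hbot]
          rfl
      _ = Subfield.relfinrank (F.map (iterateFrobenius Ω q n)) F := by
          conv_lhs => rw [← hcm, hLn]
          exact Subfield.relfinrank_comap_comap_eq_relfinrank_of_surjective _ _ _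
            (bijective_iterateFrobenius Ω q n).2
      _ = q ^ (δ * n) := key n
end

section
/- Let (K, v) be a Henselian valued field, n ≥ 2 an integer not divisible by the residue characteristic, and suppose K_n = K(α_n) with α_n^n = α ∈ K^× is a totally ramified extension of degree n. If n is odd, then the norm group N(K_n/K) equals K_n^{×n} ∩ K^×. -/
/-!
Since `e(L/K) = [L : K]`, representatives of the cosets of `v(K^×)` in `w(L^×)` form a
`K`-basis of `L` containing `1`; in such a basis the value of a vector is the largest value of
its terms, so every unit of `L` is congruent to a constant. With Hensel's lemma, a unit of `L`
whose `n`-th power lies in `K` therefore lies in `K`; applied to `αn ^ m / c`, this shows that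
the values of `1, αn, …, αn ^ (n - 1)` lie in distinct cosets of `v(K^×)`. Hence every `y ≠ 0`
is `c • αn ^ i * u` with `c ∈ K`, `w u = 1`, and `N(y) = c ^ n * α ^ i * N(u)`, where
`N(αn) = α` because `n` is odd. Writing `u = r * (1 + ε)` with `r ∈ K` and `w ε < 1`, the norm
`N(1 + ε)` is congruent to `1` (its matrix in the basis `αn ^ i` is close to the identity once
the entries are weighted by `w(αn) ^ i`), hence an `n`-th power by Hensel's lemma. Conversely,
if `y ^ n ∈ K` then `u ^ n ∈ K`, so `u ∈ K` and `y ^ n = N(c • αn ^ i * u)`.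
-/

open Polynomial Finset Module

namespace Valuation

variable {K : Type*} [Field K] {Γ : Type*} [LinearOrderedCommGroupWithZero Γ] (v : Valuation K Γ)

theorem map_sum_eq_sup {ι : Type*} (s : Finset ι) (f : ι → K)
    (hf : ∀ i ∈ s, ∀ j ∈ s, v (f i) = v (f j) → v (f i) ≠ 0 → i = j) :
    v (∑ i ∈ s, f i) = s.sup fun i => v (f i) := by
  classical
  refine le_antisymm (v.map_sum_le fun i hi => le_sup (f := fun i => v (f i)) hi) ?_
  rcases s.eq_empty_or_nonempty with rfl | hs
  · simp [bot_eq_zero]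
  obtain ⟨j, hj, hsup⟩ := s.exists_mem_eq_sup hs fun i => v (f i)
  rw [hsup]
  rcases eq_or_ne (v (f j)) 0 with h0 | h0
  · simp [h0]
  refine (v.map_sum_eq_of_lt hj fun i hi => ?_).ge
  obtain ⟨his, hij⟩ : i ∈ s ∧ i ≠ j := by simpa using hi
  exact lt_of_le_of_ne (hsup ▸ le_sup (f := fun i => v (f i)) his)
    fun h => hij (hf i his j hj h (h ▸ h0))

theorem closure_values_eq_range_unitsMap :
    Subgroup.closure {x : Γˣ | ∃ y : K, y ≠ 0 ∧ v y = (x : Γ)} =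
      (Units.map (v.toMonoidWithZeroHom : K →* Γ)).range := by
  rw [← Subgroup.closure_eq (Units.map _).range]
  congr 1
  ext x
  constructor
  · rintro ⟨y, hy, hx⟩
    exact ⟨Units.mk0 y hy, Units.ext hx⟩
  · rintro ⟨y, rfl⟩
    exact ⟨y, y.ne_zero, rfl⟩

theorem map_eq_one_of_map_sub_one_lt {x : K} (h : v (x - 1) < 1) : v x = 1 := by
  simpa using v.map_eq_of_sub_lt (x := 1) (by simpa using h)

theorem map_pow_sub_pow_le {x y : K} (hx : v x ≤ 1) (hy : v y ≤ 1) (m : ℕ) :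
    v (x ^ m - y ^ m) ≤ v (x - y) := by
  rw [← geom_sum₂_mul, map_mul]
  refine mul_le_of_le_one_left' (v.map_sum_le fun i _ => ?_)
  rw [map_mul, map_pow, map_pow]
  exact mul_le_one' (pow_le_one' hx _) (pow_le_one' hy _)

theorem eq_one_of_pow_eq_one {n : ℕ} (hn : v (n : K) = 1) {τ : K} (hτ : τ ^ n = 1)
    (h : v (τ - 1) < 1) : τ = 1 := by
  have hτ1 := v.map_eq_one_of_map_sub_one_lt h
  -- `∑ τ ^ i` is congruent to `n`, a unit
  have hsum : v (∑ i ∈ range n, τ ^ i) = 1 := by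
    rw [← hn]
    refine v.map_eq_of_sub_lt ?_
    have : ∑ i ∈ range n, τ ^ i - n = ∑ i ∈ range n, (τ ^ i - 1 ^ i) := by
      simp [sum_sub_distrib]
    rw [this, hn]
    exact v.map_sum_lt one_ne_zero fun i _ =>
      (v.map_pow_sub_pow_le hτ1.le v.map_one.le i).trans_lt h
  have hprod : (∑ i ∈ range n, τ ^ i) * (τ - 1) = 0 := by rw [geom_sum_mul, hτ, sub_self]
  rcases mul_eq_zero.1 hprod with h0 | h0
  · simp [h0] at hsum
  · exact sub_eq_zero.1 h0

theorem exists_pow_eq_of_map_sub_lt [HenselianLocalRing v.valuationSubring] {n : ℕ}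
    (hn : v (n : K) = 1) {u r : K} (hr : v r = 1) (h : v (u - r ^ n) < 1) :
    ∃ s : K, s ^ n = u ∧ v (s - r) < 1 := by
  have hn0 : n ≠ 0 := by rintro rfl; simp at hn
  have hu : v u ≤ 1 := by simpa using v.map_add_le h.le (by simp [hr] : v (r ^ n) ≤ 1)
  let O := v.valuationSubring
  let f : O[X] := X ^ n - C ⟨u, hu⟩
  have hf : f.eval ⟨r, hr.le⟩ ∈ IsLocalRing.maximalIdeal O := by
    rw [Valuation.mem_maximalIdeal_iff, ← map_neg]
    simpa [f] using h
  have hf' : IsUnit (f.derivative.eval ⟨r, hr.le⟩) := by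
    rw [(valuationSubring.integers v).isUnit_iff_valuation_eq_one]
    simp [f, derivative_X_pow, hn, hr]
  obtain ⟨s, hroot, hsr⟩ :=
    HenselianLocalRing.is_henselian f (monic_X_pow_sub_C _ hn0) _ hf hf'
  refine ⟨s, ?_, (Valuation.mem_maximalIdeal_iff _ _).1 hsr⟩
  simpa [f, sub_eq_zero, Subtype.ext_iff] using hroot

theorem map_mul_sub_one_lt {a b : K} (ha : v (a - 1) < 1) (hb : v (b - 1) < 1) :
    v (a * b - 1) < 1 := by
  rw [show a * b - 1 = a * (b - 1) + (a - 1) by ring]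
  exact v.map_add_lt (by rwa [map_mul, v.map_eq_one_of_map_sub_one_lt ha, one_mul]) ha

theorem map_prod_perm_lt_one {ι : Type*} [Fintype ι] (A : Matrix ι ι K) (t : ι → Γ)
    (ht : ∀ i, t i ≠ 0) (hdiag : ∀ i, v (A i i) ≤ 1)
    (hoff : ∀ i j, i ≠ j → v (A i j) * t i < t j) {σ : Equiv.Perm ι} (hσ : σ ≠ 1) :
    v (∏ i, A (σ i) i) < 1 := by
  classical
  have hweights : v (∏ i, A (σ i) i) = ∏ i, v (A (σ i) i) * t (σ i) / t i := by
    rw [map_prod, prod_div_distrib, prod_mul_distrib, Equiv.prod_comp σ t,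
      mul_div_cancel_right₀ _ (prod_ne_zero_iff.2 fun i _ => ht i)]
  have hle : ∀ i, v (A (σ i) i) * t (σ i) / t i ≤ 1 := fun i => by
    rcases eq_or_ne (σ i) i with hi | hi
    · rw [hi, mul_div_cancel_right₀ _ (ht i)]
      exact hdiag i
    · exact ((div_lt_one₀ (zero_lt_iff.2 (ht i))).2 (hoff _ _ hi)).le
  obtain ⟨i₀, hi₀⟩ : ∃ i, σ i ≠ i := by
    by_contra! h
    exact hσ (Equiv.ext h)
  rw [hweights, ← mul_prod_erase _ _ (mem_univ i₀)]
  exact (mul_le_of_le_one_right' (prod_le_one' fun i _ => hle i)).trans_lt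
    ((div_lt_one₀ (zero_lt_iff.2 (ht i₀))).2 (hoff _ _ hi₀))

theorem map_det_sub_one_lt {ι : Type*} [Fintype ι] [DecidableEq ι] (A : Matrix ι ι K)
    (t : ι → Γ) (ht : ∀ i, t i ≠ 0) (h : ∀ i j, v ((A - 1) i j) * t i < t j) :
    v (A.det - 1) < 1 := by
  have hdiag : ∀ i, v (A i i - 1) < 1 := fun i =>
    lt_one_of_mul_lt_left (by simpa using h i i)
  have hoff : ∀ i j, i ≠ j → v (A i j) * t i < t j := fun i j hij => by
    simpa [Matrix.one_apply_ne hij] using h i j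
  have hdiag' : ∀ i, v (A i i) ≤ 1 := fun i => (v.map_eq_one_of_map_sub_one_lt (hdiag i)).le
  rw [Matrix.det_apply, ← add_sum_erase _ _ (mem_univ 1), add_sub_right_comm]
  refine v.map_add_lt ?_ (v.map_sum_lt one_ne_zero fun σ hσ => ?_)
  · simpa using prod_induction _ (fun x => v (x - 1) < 1) (fun a b => v.map_mul_sub_one_lt)
      (by simp) fun i _ => hdiag i
  · have := v.map_prod_perm_lt_one A t ht hdiag' hoff (ne_of_mem_erase hσ)
    rcases Int.units_eq_one_or (Equiv.Perm.sign σ) with hs | hs <;> simpa [hs, Units.smul_def]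

end Valuation

section Extension

variable {K L : Type*} [Field K] [Field L] {Γ : Type*}
  [LinearOrderedCommGroupWithZero Γ] {v : Valuation K Γ} {w : Valuation L Γ}

theorem eq_of_valuation_mul_eq {ι : Type*} {b : ι → L}
    (hb : ∀ i j (c : K), w (b i) = v c * w (b j) → i = j) {i j : ι} {g g' : K}
    (h : v g * w (b i) = v g' * w (b j)) (h0 : v g * w (b i) ≠ 0) : i = j := by
  have hg : v g ≠ 0 := left_ne_zero_of_mul h0
  refine hb i j (g' / g) ?_
  rw [map_div₀, div_mul_eq_mul_div, ← h, mul_div_cancel_left₀ _ hg]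

variable [Algebra K L]

theorem valuation_sum_smul_eq_sup (hcomp : ∀ x : K, w (algebraMap K L x) = v x) {ι : Type*}
    {b : ι → L} (hb : ∀ i j (c : K), w (b i) = v c * w (b j) → i = j) (s : Finset ι)
    (g : ι → K) : w (∑ i ∈ s, g i • b i) = s.sup fun i => v (g i) * w (b i) := by
  have hterm : ∀ i, w (g i • b i) = v (g i) * w (b i) := fun i => by
    rw [Algebra.smul_def, map_mul, hcomp]
  rw [w.map_sum_eq_sup s _ fun i _ j _ h h0 => ?_]
  · simp only [hterm]
  · rw [hterm, hterm] at h
    rw [hterm] at h0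
    exact eq_of_valuation_mul_eq hb h h0

theorem linearIndependent_of_valuation (hcomp : ∀ x : K, w (algebraMap K L x) = v x)
    {ι : Type*} {b : ι → L} (hb0 : ∀ i, b i ≠ 0)
    (hb : ∀ i j (c : K), w (b i) = v c * w (b j) → i = j) : LinearIndependent K b := by
  rw [linearIndependent_iff']
  intro s g hsum i hi
  have h := valuation_sum_smul_eq_sup hcomp hb s g
  rw [hsum, map_zero, eq_comm, ← bot_eq_zero, Finset.sup_eq_bot_iff] at h
  simpa [hb0 i, bot_eq_zero] using h i hi

theorem Module.Basis.valuation_repr_mul_le (hcomp : ∀ x : K, w (algebraMap K L x) = v x)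
    {ι : Type*} [Fintype ι] (B : Basis ι K L)
    (hB : ∀ i j (c : K), w (B i) = v c * w (B j) → i = j) (z : L) (i : ι) :
    v (B.repr z i) * w (B i) ≤ w z := by
  conv_rhs => rw [← B.sum_repr z, valuation_sum_smul_eq_sup hcomp hB]
  exact le_sup (f := fun i => v (B.repr z i) * w (B i)) (mem_univ i)

theorem Module.Basis.exists_eq_smul_mul (hcomp : ∀ x : K, w (algebraMap K L x) = v x)
    {ι : Type*} [Fintype ι] (B : Basis ι K L)
    (hB : ∀ i j (c : K), w (B i) = v c * w (B j) → i = j) {z : L} (hz : z ≠ 0) :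
    ∃ (c : K) (i : ι) (u : L), w u = 1 ∧ z = c • B i * u := by
  have := B.index_nonempty
  obtain ⟨i, -, hi⟩ := univ.exists_mem_eq_sup univ_nonempty
    fun i => v (B.repr z i) * w (B i)
  have hwz : w (B.repr z i • B i) = w z := by
    rw [Algebra.smul_def, map_mul, hcomp, ← hi, ← valuation_sum_smul_eq_sup hcomp hB,
      B.sum_repr]
  have h0 : B.repr z i • B i ≠ 0 := by
    rw [← w.ne_zero_iff, hwz, w.ne_zero_iff]
    exact hz
  refine ⟨B.repr z i, i, z / (B.repr z i • B i), ?_, by field_simp⟩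
  rw [map_div₀, hwz, div_self (w.ne_zero_iff.2 hz)]

theorem Module.Basis.exists_valuation_sub_algebraMap_lt_one
    (hcomp : ∀ x : K, w (algebraMap K L x) = v x) {ι : Type*} [Fintype ι] (B : Basis ι K L)
    (hB : ∀ i j (c : K), w (B i) = v c * w (B j) → i = j) {i₁ : ι} (hi₁ : B i₁ = 1)
    {u : L} (hu : w u = 1) : ∃ r : K, w (u - algebraMap K L r) < 1 := by
  classical
  have hsup := valuation_sum_smul_eq_sup hcomp hB univ (B.repr u)
  rw [B.sum_repr, hu] at hsup
  obtain ⟨i₀, -, hi₀⟩ := univ.exists_mem_eq_sup ⟨i₁, mem_univ _⟩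
    fun i => v (B.repr u i) * w (B i)
  rw [hi₀] at hsup
  -- the dominant coordinate of `u` is its coordinate along `1`
  obtain rfl : i₀ = i₁ := eq_of_valuation_mul_eq hB (g' := 1)
    (by rw [← hsup, hi₁, map_one, map_one, one_mul]) (by rw [← hsup]; exact one_ne_zero)
  refine ⟨B.repr u i₀, ?_⟩
  have hsum := B.sum_repr u
  rw [← add_sum_erase _ _ (mem_univ i₀), hi₁, ← Algebra.algebraMap_eq_smul_one] at hsum
  rw [sub_eq_of_eq_add' hsum.symm, valuation_sum_smul_eq_sup hcomp hB,
    Finset.sup_lt_iff (by rw [bot_eq_zero]; exact zero_lt_one)]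
  intro i hi
  have hle := (le_sup (f := fun i => v (B.repr u i) * w (B i)) (mem_univ i)).trans_eq
    (hi₀.trans hsup.symm)
  refine lt_of_le_of_ne hle fun h => ne_of_mem_erase hi ?_
  exact eq_of_valuation_mul_eq hB (h.trans hsup) (by rw [h]; exact one_ne_zero)

theorem exists_valuation_sub_algebraMap_lt_one [FiniteDimensional K L]
    (hcomp : ∀ x : K, w (algebraMap K L x) = v x)
    (hram : (Subgroup.closure {x : Γˣ | ∃ k : K, k ≠ 0 ∧ v k = (x : Γ)}).relIndex
        (Subgroup.closure {x : Γˣ | ∃ y : L, y ≠ 0 ∧ w y = (x : Γ)}) = finrank K L)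
    {u : L} (hu : w u = 1) : ∃ r : K, w (u - algebraMap K L r) < 1 := by
  set HK := Subgroup.closure {x : Γˣ | ∃ k : K, k ≠ 0 ∧ v k = (x : Γ)}
  let ψ : Lˣ →* Γˣ := Units.map (w.toMonoidWithZeroHom : L →* Γ)
  let Q := Lˣ ⧸ HK.comap ψ
  have hcard : Nat.card Q = finrank K L := by
    rw [← Subgroup.index, Subgroup.index_comap, ← w.closure_values_eq_range_unitsMap, hram]
  have : Fintype Q := @Fintype.ofFinite _ (Nat.finite_of_card_ne_zero (hcard ▸ finrank_pos.ne'))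
  have hmk : ∀ (y y' : Lˣ) (c : K), w y = v c * w y' → (y : Q) = y' := by
    intro y y' c h
    have hc : c ≠ 0 := by
      rintro rfl
      simp at h
    refine QuotientGroup.eq.2 (Subgroup.mem_comap.2 ?_)
    have : ψ (y⁻¹ * y') = (Units.mk0 (v c) ((Valuation.ne_zero_iff v).2 hc))⁻¹ := by
      ext
      simp [ψ, h, mul_right_comm _ _ (w (y' : L))]
    rw [this]
    exact HK.inv_mem (Subgroup.subset_closure ⟨c, hc, rfl⟩)
  -- representatives of the cosets, normalized so that `1` represents the trivial one
  let b : Q → Lˣ := fun q => q.out * (1 : Q).out⁻¹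
  have hb : ∀ q q' (c : K), w (b q : L) = v c * w (b q' : L) → q = q' := by
    have hbq : ∀ q, (b q : Q) = q := fun q => by simp [b]
    intro q q' c h
    rw [← hbq q, ← hbq q']
    exact hmk _ _ c h
  let B := basisOfLinearIndependentOfCardEqFinrank
    (linearIndependent_of_valuation hcomp (fun q => (b q).ne_zero) hb)
    (by rw [← Nat.card_eq_fintype_card, hcard])
  have : Nonempty Q := ⟨1⟩
  exact B.exists_valuation_sub_algebraMap_lt_one hcomp (by simpa [B] using hb) (i₁ := 1)
    (by simp [B, b]) hu

theorem valuation_eq_one_of_sub_algebraMap_lt (hcomp : ∀ x : K, w (algebraMap K L x) = v x)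
    {u : L} (hu : w u = 1) {r : K} (h : w (u - algebraMap K L r) < 1) : v r = 1 := by
  rw [← hcomp, w.map_eq_of_sub_lt (by rwa [w.map_sub_swap, hu]), hu]

theorem exists_eq_algebraMap_of_pow_eq [HenselianLocalRing v.valuationSubring]
    (hcomp : ∀ x : K, w (algebraMap K L x) = v x)
    (hresidue : ∀ u : L, w u = 1 → ∃ r : K, w (u - algebraMap K L r) < 1) {n : ℕ}
    (hn : v (n : K) = 1) {u : L} (hu : w u = 1) {k : K} (huk : u ^ n = algebraMap K L k) :
    ∃ s : K, u = algebraMap K L s := by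
  obtain ⟨r, hur⟩ := hresidue u hu
  have hr := valuation_eq_one_of_sub_algebraMap_lt hcomp hu hur
  have hkr : v (k - r ^ n) < 1 := by
    rw [← hcomp, map_sub, map_pow, ← huk]
    exact (w.map_pow_sub_pow_le hu.le (by rw [hcomp, hr]) n).trans_lt hur
  obtain ⟨s, rfl, hsr⟩ := v.exists_pow_eq_of_map_sub_lt hn hr hkr
  have hs : v s = 1 := by rw [v.map_eq_of_sub_lt (by rwa [hr]), hr]
  have hs0 : algebraMap K L s ≠ 0 := by
    rw [← w.ne_zero_iff, hcomp, hs]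
    exact one_ne_zero
  -- `u / s` is an `n`-th root of unity congruent to `1`
  have hτ : (u / algebraMap K L s) ^ n = 1 := by
    rw [div_pow, huk, map_pow, div_self (pow_ne_zero _ hs0)]
  have hτ1 : w (u / algebraMap K L s - 1) < 1 := by
    rw [div_sub_one hs0, map_div₀, hcomp, hs, div_one,
      show u - algebraMap K L s = (u - algebraMap K L r) - algebraMap K L (s - r) by
        rw [map_sub]; ring]
    exact w.map_sub_lt hur (by rwa [hcomp])
  refine ⟨s, (div_eq_one_iff_eq hs0).1 (w.eq_one_of_pow_eq_one ?_ hτ hτ1)⟩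
  rw [← map_natCast (algebraMap K L), hcomp, hn]

theorem Module.Basis.valuation_norm_one_add_sub_one_lt
    (hcomp : ∀ x : K, w (algebraMap K L x) = v x) {ι : Type*} [Fintype ι] (B : Basis ι K L)
    (hB : ∀ i j (c : K), w (B i) = v c * w (B j) → i = j) {ε : L} (hε : w ε < 1) :
    v (Algebra.norm K (1 + ε) - 1) < 1 := by
  classical
  rw [Algebra.norm_eq_matrix_det B]
  refine v.map_det_sub_one_lt _ (fun i => w (B i)) (fun i => w.ne_zero_iff.2 (B.ne_zero i))
    fun i j => ?_
  rw [map_add, map_one, add_sub_cancel_left, Algebra.leftMulMatrix_eq_repr_mul]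
  calc v (B.repr (ε * B j) i) * w (B i) ≤ w (ε * B j) := B.valuation_repr_mul_le hcomp hB _ i
    _ = w ε * w (B j) := map_mul ..
    _ < w (B j) := mul_lt_of_lt_one_left (zero_lt_iff.2 (w.ne_zero_iff.2 (B.ne_zero j))) hε

theorem Module.Basis.exists_norm_eq_pow [HenselianLocalRing v.valuationSubring]
    (hcomp : ∀ x : K, w (algebraMap K L x) = v x)
    (hresidue : ∀ u : L, w u = 1 → ∃ r : K, w (u - algebraMap K L r) < 1) {ι : Type*}
    [Fintype ι] (B : Basis ι K L) (hB : ∀ i j (c : K), w (B i) = v c * w (B j) → i = j)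
    (hn : v (finrank K L : K) = 1) {u : L} (hu : w u = 1) :
    ∃ s : K, Algebra.norm K u = s ^ finrank K L := by
  obtain ⟨r, hur⟩ := hresidue u hu
  have hr := valuation_eq_one_of_sub_algebraMap_lt hcomp hu hur
  have hr0 : algebraMap K L r ≠ 0 := by
    rw [← w.ne_zero_iff, hcomp, hr]
    exact one_ne_zero
  set ε := u / algebraMap K L r - 1 with hε_def
  have hε : w ε < 1 := by rwa [hε_def, div_sub_one hr0, map_div₀, hcomp, hr, div_one]
  obtain ⟨t, ht, -⟩ := v.exists_pow_eq_of_map_sub_lt hn v.map_one (r := 1)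
    (by simpa using B.valuation_norm_one_add_sub_one_lt hcomp hB hε)
  have hu' : u = algebraMap K L r * (1 + ε) := by
    rw [hε_def, add_sub_cancel, mul_div_cancel₀ _ hr0]
  refine ⟨r * t, ?_⟩
  rw [hu', map_mul, Algebra.norm_algebraMap, ← ht, mul_pow]

end Extension

section PowerBasis

variable {K L : Type*} [Field K] [Field L] [Algebra K L]

theorem minpoly_eq_X_pow_sub_C {x : L} {a : K} {n : ℕ} (hn : n ≠ 0)
    (hx : x ^ n = algebraMap K L a) (hdeg : (minpoly K x).natDegree = n) :
    minpoly K x = X ^ n - C a := by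
  have hmonic := monic_X_pow_sub_C a hn
  have haeval : aeval x (X ^ n - C a) = 0 := by simp [hx]
  exact (eq_of_monic_of_dvd_of_natDegree_le (minpoly.monic ⟨_, hmonic, haeval⟩) hmonic
    (minpoly.dvd K x haeval) (by rw [natDegree_X_pow_sub_C, hdeg])).symm

theorem PowerBasis.norm_gen_eq_of_pow_eq (pb : PowerBasis K L) (hodd : Odd pb.dim) {a : K}
    (ha : pb.gen ^ pb.dim = algebraMap K L a) : Algebra.norm K pb.gen = a := by
  rw [Algebra.PowerBasis.norm_gen_eq_coeff_zero_minpoly,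
    minpoly_eq_X_pow_sub_C hodd.pos.ne' ha pb.natDegree_minpoly, hodd.neg_one_pow]
  simp [hodd.pos.ne]

theorem PowerBasis.gen_pow_ne_algebraMap (pb : PowerBasis K L) {m : ℕ} (hm0 : 0 < m)
    (hm : m < pb.dim) (c : K) : pb.gen ^ m ≠ algebraMap K L c := by
  intro h
  have := natDegree_le_of_dvd (minpoly.dvd K pb.gen (p := X ^ m - C c) (by simp [h]))
    (monic_X_pow_sub_C c hm0.ne').ne_zero
  rw [pb.natDegree_minpoly, natDegree_X_pow_sub_C] at this
  omega

theorem PowerBasis.smul_basis_pow_dim (pb : PowerBasis K L) {a : K}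
    (ha : pb.gen ^ pb.dim = algebraMap K L a) (c : K) (i : Fin pb.dim) :
    (c • pb.basis i) ^ pb.dim = algebraMap K L (c ^ pb.dim * a ^ (i : ℕ)) := by
  rw [pb.basis_eq_pow, _root_.smul_pow, ← pow_mul, mul_comm, pow_mul, ha, Algebra.smul_def,
    map_mul, map_pow, map_pow]

theorem PowerBasis.norm_smul_basis (pb : PowerBasis K L) (hodd : Odd pb.dim) {a : K}
    (ha : pb.gen ^ pb.dim = algebraMap K L a) (c : K) (i : Fin pb.dim) :
    Algebra.norm K (c • pb.basis i) = c ^ pb.dim * a ^ (i : ℕ) := by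
  rw [pb.basis_eq_pow, Algebra.smul_def, map_mul, map_pow, Algebra.norm_algebraMap, pb.finrank,
    pb.norm_gen_eq_of_pow_eq hodd ha]

variable {Γ : Type*} [LinearOrderedCommGroupWithZero Γ] {v : Valuation K Γ} {w : Valuation L Γ}
  [HenselianLocalRing v.valuationSubring]

theorem PowerBasis.valuation_gen_pow_ne (hcomp : ∀ x : K, w (algebraMap K L x) = v x)
    (hresidue : ∀ u : L, w u = 1 → ∃ r : K, w (u - algebraMap K L r) < 1)
    (pb : PowerBasis K L) (hn : v (pb.dim : K) = 1) {a : K}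
    (ha : pb.gen ^ pb.dim = algebraMap K L a) {m : ℕ} (hm0 : 0 < m) (hm : m < pb.dim) (c : K) :
    w pb.gen ^ m ≠ v c := by
  intro h
  rcases eq_or_ne c 0 with rfl | hc
  · have : pb.gen = 0 := by simpa [hm0.ne'] using h
    exact pb.gen_pow_ne_algebraMap hm0 hm 0 (by simp [this, hm0.ne'])
  have hc' : algebraMap K L c ≠ 0 := by simpa
  -- `gen ^ m / c` is a unit whose `dim`-th power lies in `K`, so it lies in `K` itself
  obtain ⟨s, hs⟩ := exists_eq_algebraMap_of_pow_eq hcomp hresidue hn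
    (u := pb.gen ^ m / algebraMap K L c) (k := a ^ m / c ^ pb.dim)
    (by rw [map_div₀, map_pow, hcomp, h, div_self (v.ne_zero_iff.2 hc)])
    (by rw [div_pow, ← pow_mul, mul_comm, pow_mul, ha, map_div₀, map_pow, map_pow])
  exact pb.gen_pow_ne_algebraMap hm0 hm (c * s) (by rw [map_mul, ← hs, mul_div_cancel₀ _ hc'])

theorem PowerBasis.eq_of_valuation_basis_eq_mul (hcomp : ∀ x : K, w (algebraMap K L x) = v x)
    (hresidue : ∀ u : L, w u = 1 → ∃ r : K, w (u - algebraMap K L r) < 1)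
    (pb : PowerBasis K L) (hn : v (pb.dim : K) = 1) {a : K}
    (ha : pb.gen ^ pb.dim = algebraMap K L a) :
    ∀ i j (c : K), w (pb.basis i) = v c * w (pb.basis j) → i = j := by
  intro i j c h
  simp only [pb.basis_eq_pow, map_pow] at h
  by_contra hij
  have hij' : (i : ℕ) ≠ j := Fin.val_ne_of_ne hij
  have hgen : w pb.gen ≠ 0 := by
    simpa using pb.valuation_gen_pow_ne hcomp hresidue hn ha one_pos (by omega) 0
  rcases lt_or_gt_of_ne hij' with hlt | hlt
  · refine pb.valuation_gen_pow_ne hcomp hresidue hn ha (m := j - i) (by omega) (by omega) c⁻¹ ?_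
    rw [pow_sub₀ _ hgen hlt.le, h, map_inv₀, mul_inv_rev,
      mul_inv_cancel_left₀ (pow_ne_zero _ hgen)]
  · refine pb.valuation_gen_pow_ne hcomp hresidue hn ha (m := i - j) (by omega) (by omega) c ?_
    rw [pow_sub₀ _ hgen hlt.le, h, mul_inv_cancel_right₀ (pow_ne_zero _ hgen)]

theorem PowerBasis.exists_pow_eq_algebraMap_norm (hcomp : ∀ x : K, w (algebraMap K L x) = v x)
    (hresidue : ∀ u : L, w u = 1 → ∃ r : K, w (u - algebraMap K L r) < 1)
    (pb : PowerBasis K L) (hodd : Odd pb.dim) (hn : v (pb.dim : K) = 1) {a : K}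
    (ha : pb.gen ^ pb.dim = algebraMap K L a) {y : L} (hy : y ≠ 0) :
    ∃ z : L, z ^ pb.dim = algebraMap K L (Algebra.norm K y) := by
  have hB := pb.eq_of_valuation_basis_eq_mul hcomp hresidue hn ha
  obtain ⟨c, i, u, hu, rfl⟩ := pb.basis.exists_eq_smul_mul hcomp hB hy
  obtain ⟨s, hs⟩ := pb.basis.exists_norm_eq_pow hcomp hresidue hB (pb.finrank ▸ hn) hu
  refine ⟨c • pb.basis i * algebraMap K L s, ?_⟩
  rw [mul_pow, pb.smul_basis_pow_dim ha, map_mul (Algebra.norm K), pb.norm_smul_basis hodd ha,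
    hs, pb.finrank, ← map_pow, ← map_mul]

theorem PowerBasis.exists_norm_eq_of_pow_eq (hcomp : ∀ x : K, w (algebraMap K L x) = v x)
    (hresidue : ∀ u : L, w u = 1 → ∃ r : K, w (u - algebraMap K L r) < 1)
    (pb : PowerBasis K L) (hodd : Odd pb.dim) (hn : v (pb.dim : K) = 1) {a : K}
    (ha : pb.gen ^ pb.dim = algebraMap K L a) {y : L} (hy0 : y ≠ 0) {x : K}
    (hy : y ^ pb.dim = algebraMap K L x) : ∃ z : L, Algebra.norm K z = x := by
  have hB := pb.eq_of_valuation_basis_eq_mul hcomp hresidue hn ha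
  obtain ⟨c, i, u, hu, rfl⟩ := pb.basis.exists_eq_smul_mul hcomp hB hy0
  have hcb : c • pb.basis i ≠ 0 := left_ne_zero_of_mul hy0
  obtain ⟨s, rfl⟩ := exists_eq_algebraMap_of_pow_eq hcomp hresidue hn hu
    (k := x / (c ^ pb.dim * a ^ (i : ℕ)))
    (by rw [map_div₀, ← pb.smul_basis_pow_dim ha, ← hy, mul_pow,
      mul_div_cancel_left₀ _ (pow_ne_zero _ hcb)])
  refine ⟨c • pb.basis i * algebraMap K L s, (algebraMap K L).injective ?_⟩
  rw [← hy, map_mul (Algebra.norm K), pb.norm_smul_basis hodd ha, Algebra.norm_algebraMap,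
    pb.finrank, mul_pow, pb.smul_basis_pow_dim ha, map_mul, map_pow]

end PowerBasis

theorem norm_group_eq_nth_powers_of_totally_ramified_general
    (K L : Type*) [Field K] [Field L] [Algebra K L] [FiniteDimensional K L]
    (Γ : Type*) [LinearOrderedCommGroupWithZero Γ]
    (v : Valuation K Γ) (w : Valuation L Γ)
    [HenselianLocalRing v.valuationSubring]
    (hcomp : ∀ x : K, w (algebraMap K L x) = v x)
    (n : ℕ) (hodd : Odd n) (hres : v (n : K) = 1)
    (α : K) (αn : L) (hroot : αn ^ n = algebraMap K L α)
    (hgen : IntermediateField.adjoin K {αn} = ⊤)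
    (hdeg : Module.finrank K L = n)
    (hram : (Subgroup.closure {x : Γˣ | ∃ k : K, k ≠ 0 ∧ v k = (x : Γ)}).relIndex
        (Subgroup.closure {x : Γˣ | ∃ y : L, y ≠ 0 ∧ w y = (x : Γ)}) = n) :
    ∀ x : K, x ≠ 0 →
      ((∃ y : L, Algebra.norm K y = x) ↔ ∃ y : L, y ^ n = algebraMap K L x) := by
  have hresidue : ∀ u : L, w u = 1 → ∃ r : K, w (u - algebraMap K L r) < 1 :=
    fun u => exists_valuation_sub_algebraMap_lt_one hcomp (hdeg ▸ hram)
  have hint : IsIntegral K αn := .of_finite K αn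
  obtain ⟨pb, rfl, rfl⟩ : ∃ pb : PowerBasis K L, pb.gen = αn ∧ pb.dim = n :=
    let pb := PowerBasis.ofAdjoinEqTop hint
      (Algebra.adjoin_eq_top_of_primitive_element hint.isAlgebraic hgen)
    ⟨pb, rfl, by rw [← hdeg, pb.finrank]⟩
  intro x hx
  constructor
  · rintro ⟨y, rfl⟩
    exact pb.exists_pow_eq_algebraMap_norm hcomp hresidue hodd hres hroot
      (by rintro rfl; simp at hx)
  · rintro ⟨y, hy⟩
    refine pb.exists_norm_eq_of_pow_eq hcomp hresidue hodd hres hroot ?_ hy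
    rintro rfl
    rw [zero_pow hodd.pos.ne', eq_comm, map_eq_zero] at hy
    exact hx hy

/-- Over a Henselian valued field `(K, v)` with `n ≥ 2` odd and prime to the residue
characteristic (`v n = 1`), if `K_n = K(α_n)` with `α_n^n = α` is totally ramified of
degree `n` over `K`, then the norm group `N(K_n/K)` equals `K_n^{×n} ∩ K^×`. -/
theorem norm_group_eq_nth_powers_of_totally_ramified
    (K L : Type*) [Field K] [Field L] [Algebra K L] [FiniteDimensional K L]
    (Γ : Type*) [LinearOrderedCommGroupWithZero Γ]
    (v : Valuation K Γ) (w : Valuation L Γ)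
    [HenselianLocalRing v.valuationSubring]
    (hcomp : ∀ x : K, w (algebraMap K L x) = v x)
    (n : ℕ) (hn : 2 ≤ n) (hodd : Odd n) (hres : v (n : K) = 1)
    (α : K) (hα : α ≠ 0) (αn : L) (hroot : αn ^ n = algebraMap K L α)
    (hgen : IntermediateField.adjoin K {αn} = ⊤)
    (hdeg : Module.finrank K L = n)
    (hram : (Subgroup.closure {x : Γˣ | ∃ k : K, k ≠ 0 ∧ v k = (x : Γ)}).relIndex
        (Subgroup.closure {x : Γˣ | ∃ y : L, y ≠ 0 ∧ w y = (x : Γ)}) = n) :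
    ∀ x : K, x ≠ 0 →
      ((∃ y : L, Algebra.norm K y = x) ↔ ∃ y : L, y ^ n = algebraMap K L x) :=
  norm_group_eq_nth_powers_of_totally_ramified_general K L Γ v w hcomp n hodd hres α αn hroot hgen
    hdeg hram
end
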